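/- Let (Y, F) be a topological fractal and let Z be a finite union of continuous images of Y such that Y ∩ Z = ∅. Fix y₀ ∈ Y and z₀ ∈ Z. Extending each f ∈ F to Y ∪ Z by setting it equal to y₀ on Z, and extending each surjection p: Y → (piece of Z) to Y ∪ Z by setting it equal to z₀ on Z, yields a family F' ∪ P' making (Y ∪ Z, F' ∪ P') a topological fractal. -/

import Mathlib

open Set

/-- Composition of a list of self-maps. -/
def Comp {X : Type*} (l : List (X → X)) : X → X := l.foldr (· ∘ ·) id

/-- `F` is a topologically contracting system on `Y ⊆ X`. -/
def TopContracting {X : Type*} [TopologicalSpace X] (F : Set (X → X)) (Y : Set X) : Prop :=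
  ∀ 𝒰 : Set (Set X), (∀ U ∈ 𝒰, IsOpen U) → Y ⊆ ⋃₀ 𝒰 →
    ∃ n : ℕ, ∀ l : List (X → X), l.length = n → (∀ f ∈ l, f ∈ F) →
      ∃ U ∈ 𝒰, Comp l '' Y ⊆ U

/-- `(Y, F)` is a topological fractal, where `Y` is a compact subset of an ambient space. -/
def TopFractalOn {X : Type*} [TopologicalSpace X] (F : Set (X → X)) (Y : Set X) : Prop :=
  IsCompact Y ∧ F.Finite ∧ (∀ f ∈ F, ContinuousOn f Y ∧ f '' Y ⊆ Y) ∧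
    (⋃ f ∈ F, f '' Y) = Y ∧ TopContracting F Y

/-!
`Y` and `Z` are disjoint and compact, hence clopen in `Y ∪ Z`, so the extended maps are continuous;
each of them sends all of `Y ∪ Z` into `Y` (those of `F'`) or into `Z` (those of `P'`) and is
constant on `Z`. Given an open cover `𝒰` of `Y ∪ Z`, refine it to an open cover `𝒲` of `Y` such
that every extended map sends `S ∩ Y` into a member of `𝒰` for each `S ∈ 𝒲`, and let `m` be the
contraction index of `F` for `𝒲`. Write a word of length `m + 2` as `g :: t`, with `g` applied
last. If some letter of `t` lies in `P'`, it lands in `Z`, where the letter applied after it is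
constant, so the word is constant on `Y ∪ Z`. Otherwise `t` is a word in `F'`: its first applied
letter maps `Y ∪ Z` into `Y`, the remaining `m` letters map `Y` into some `S ∩ Y` with `S ∈ 𝒲`,
and `g` sends that into a member of `𝒰`.
-/

section

variable {X : Type*}

theorem Comp_cons (g : X → X) (l : List (X → X)) : Comp (g :: l) = g ∘ Comp l := rfl

theorem Comp_append (l₁ l₂ : List (X → X)) :
    Comp (l₁ ++ l₂) = Comp l₁ ∘ Comp l₂ := by
  induction l₁ with
  | nil => rfl
  | cons g l ih => rw [List.cons_append, Comp_cons, Comp_cons, ih, Function.comp_assoc]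

theorem Comp_append_singleton (l : List (X → X)) (g : X → X) :
    Comp (l ++ [g]) = Comp l ∘ g :=
  Comp_append l [g]

theorem mapsTo_Comp {s : Set X} {l : List (X → X)} (h : ∀ f ∈ l, MapsTo f s s) :
    MapsTo (Comp l) s s := by
  induction l with
  | nil => exact mapsTo_id s
  | cons g l ih =>
    rw [List.forall_mem_cons] at h
    exact h.1.comp (ih h.2)

theorem eqOn_Comp_map {s : Set X} {φ : (X → X) → X → X} {l : List (X → X)}
    (h : ∀ g ∈ l, EqOn g (φ g) s ∧ MapsTo (φ g) s s) : EqOn (Comp l) (Comp (l.map φ)) s := by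
  induction l with
  | nil => exact eqOn_refl _ _
  | cons g l ih =>
    rw [List.forall_mem_cons] at h
    intro x hx
    have hmaps : MapsTo (Comp (l.map φ)) s s :=
      mapsTo_Comp (by simpa using fun g hg => (h.2 g hg).2)
    simp only [List.map_cons, Comp_cons, Function.comp_apply, ih h.2 hx]
    exact h.1.1 (hmaps hx)

theorem exists_Comp_eq_of_const_on {K Z : Set X} {l : List (X → X)} (hl : l ≠ [])
    (hmaps : ∀ g ∈ l, MapsTo g K K) (hconst : ∀ g ∈ l, ∃ c ∈ K, ∀ z ∈ Z, g z = c) :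
    ∃ c ∈ K, ∀ z ∈ Z, Comp l z = c := by
  obtain ⟨L, g, rfl⟩ := (List.eq_nil_or_concat' l).resolve_left hl
  obtain ⟨c, hc, hgc⟩ := hconst g (by simp)
  refine ⟨Comp L c, mapsTo_Comp (fun f hf => hmaps f (by simp [hf])) hc, fun z hz => ?_⟩
  rw [Comp_append_singleton, Function.comp_apply, hgc z hz]

theorem Comp_append_singleton_mem_inter {Y S : Set X} {l : List (X → X)} {h : X → X}
    (hl : ∀ f ∈ l, MapsTo f Y Y) (hlS : Comp l '' Y ⊆ S) (hh : ∀ x, h x ∈ Y) (x : X) :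
    Comp (l ++ [h]) x ∈ S ∩ Y := by
  rw [Comp_append_singleton, Function.comp_apply]
  exact ⟨hlS (mem_image_of_mem _ (hh x)), mapsTo_Comp hl (hh x)⟩

theorem forall_apply_mem_union {Y Z : Set X} {G₁ G₂ : Set (X → X)}
    (hG₁ : ∀ g ∈ G₁, ∀ x, g x ∈ Y) (hG₂ : ∀ g ∈ G₂, ∀ x, g x ∈ Z) :
    ∀ g ∈ G₁ ∪ G₂, ∀ x, g x ∈ Y ∪ Z := by
  rintro g (hg | hg) x
  exacts [Or.inl (hG₁ g hg x), Or.inr (hG₂ g hg x)]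

variable [TopologicalSpace X]

theorem TopContracting.of_eqOn {F G : Set (X → X)} {Y : Set X} (hF : TopContracting F Y)
    (hFY : ∀ f ∈ F, MapsTo f Y Y) (hG : ∀ g ∈ G, ∃ f ∈ F, EqOn g f Y) : TopContracting G Y := by
  choose! φ hφF hφ using hG
  intro 𝒰 h𝒰 hY
  obtain ⟨n, hn⟩ := hF 𝒰 h𝒰 hY
  refine ⟨n, fun l hl hlG => ?_⟩
  obtain ⟨U, hU, hsub⟩ :=
    hn (l.map φ) (by rw [List.length_map, hl]) (by simpa using fun g hg => hφF g (hlG g hg))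
  refine ⟨U, hU, ?_⟩
  rwa [(eqOn_Comp_map fun g hg => ⟨hφ g (hlG g hg), hFY _ (hφF g (hlG g hg))⟩).image_eq]

theorem exists_isOpen_forall_image_inter_subset {β : Type*} [TopologicalSpace β] {Y : Set X}
    {G : Set (X → β)} {𝒰 : Set (Set β)} (hG : G.Finite) (hcont : ∀ g ∈ G, ContinuousOn g Y)
    (h𝒰 : ∀ U ∈ 𝒰, IsOpen U) (hmaps : ∀ g ∈ G, MapsTo g Y (⋃₀ 𝒰)) {y : X} (hy : y ∈ Y) :
    ∃ S, IsOpen S ∧ y ∈ S ∧ ∀ g ∈ G, ∃ U ∈ 𝒰, g '' (S ∩ Y) ⊆ U := by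
  choose! U hU hgU using fun g hg => mem_sUnion.1 (hmaps g hg hy)
  have hmem : ⋂ g ∈ G, g ⁻¹' U g ∈ nhdsWithin y Y := (Filter.biInter_mem hG).2 fun g hg =>
    hcont g hg y hy ((h𝒰 _ (hU g hg)).mem_nhds (hgU g hg))
  obtain ⟨S, hSo, hyS, hSsub⟩ := mem_nhdsWithin.1 hmem
  exact ⟨S, hSo, hyS, fun g hg =>
    ⟨U g, hU g hg, image_subset_iff.2 fun x hx => mem_iInter₂.1 (hSsub hx) g hg⟩⟩

theorem TopContracting.union_of_const_on {Y Z : Set X} {G₁ G₂ : Set (X → X)}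
    (hcontr : TopContracting G₁ Y) (hG : (G₁ ∪ G₂).Finite)
    (hcont : ∀ g ∈ G₁ ∪ G₂, ContinuousOn g Y)
    (hG₁ : ∀ g ∈ G₁, ∀ x, g x ∈ Y) (hG₂ : ∀ g ∈ G₂, ∀ x, g x ∈ Z)
    (hconst : ∀ g ∈ G₁ ∪ G₂, ∃ c ∈ Y ∪ Z, ∀ z ∈ Z, g z = c) :
    TopContracting (G₁ ∪ G₂) (Y ∪ Z) := by
  have hmaps := forall_apply_mem_union hG₁ hG₂
  intro 𝒰 h𝒰 hcov
  obtain ⟨m, hm⟩ := hcontr {S | IsOpen S ∧ ∀ g ∈ G₁ ∪ G₂, ∃ U ∈ 𝒰, g '' (S ∩ Y) ⊆ U}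
    (fun S hS => hS.1) fun y hy => by
      obtain ⟨S, hSo, hyS, hS⟩ := exists_isOpen_forall_image_inter_subset hG hcont h𝒰
        (fun g hg x _ => hcov (hmaps g hg x)) hy
      exact ⟨S, ⟨hSo, hS⟩, hyS⟩
  refine ⟨m + 2, fun l hl hlG => ?_⟩
  obtain ⟨g, t, rfl⟩ := List.exists_cons_of_length_eq_add_one hl
  rw [List.forall_mem_cons] at hlG
  by_cases ht : ∀ h ∈ t, h ∈ G₁
  · obtain ⟨t₁, h, rfl⟩ := (List.eq_nil_or_concat' t).resolve_left (by rintro rfl; simp at hl)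
    simp only [List.mem_append, List.mem_singleton] at ht
    obtain ⟨S, ⟨-, hS⟩, hSsub⟩ := hm t₁ (by simpa using hl) fun f hf => ht f (Or.inl hf)
    obtain ⟨U, hU, hgU⟩ := hS g hlG.1
    refine ⟨U, hU, ?_⟩
    rintro _ ⟨x, -, rfl⟩
    exact hgU (mem_image_of_mem g (Comp_append_singleton_mem_inter
      (fun f hf _ _ => hG₁ f (ht f (Or.inl hf)) _) hSsub (hG₁ h (ht h (Or.inr rfl))) x))
  · push Not at ht
    obtain ⟨q, hqt, hqG₁⟩ := ht
    have hqG₂ : q ∈ G₂ := (hlG.2 q hqt).resolve_left hqG₁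
    obtain ⟨a, b, rfl⟩ := List.append_of_mem hqt
    have hga : ∀ f ∈ g :: a, f ∈ G₁ ∪ G₂ := by
      simpa using ⟨hlG.1, fun f hf => hlG.2 f (List.mem_append_left _ hf)⟩
    obtain ⟨c, hc, hcZ⟩ := exists_Comp_eq_of_const_on (List.cons_ne_nil g a)
      (fun f hf x _ => hmaps f (hga f hf) x) fun f hf => hconst f (hga f hf)
    obtain ⟨U, hU, hcU⟩ := hcov hc
    refine ⟨U, hU, ?_⟩
    rintro _ ⟨x, -, rfl⟩
    rw [← List.cons_append, Comp_append, Function.comp_apply, Comp_cons q b, Function.comp_apply,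
      hcZ _ (hG₂ q hqG₂ _)]
    exact hcU

theorem TopFractalOn.union_of_const_on {Y Z : Set X} {G₁ G₂ : Set (X → X)}
    (hY : IsCompact Y) (hZ : IsCompact Z) (hG : (G₁ ∪ G₂).Finite)
    (hcont : ∀ g ∈ G₁ ∪ G₂, ContinuousOn g (Y ∪ Z))
    (hG₁ : ∀ g ∈ G₁, ∀ x, g x ∈ Y) (hG₂ : ∀ g ∈ G₂, ∀ x, g x ∈ Z)
    (hG₁Y : ⋃ g ∈ G₁, g '' Y = Y) (hG₂Y : ⋃ g ∈ G₂, g '' Y = Z)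
    (hconst : ∀ g ∈ G₁ ∪ G₂, ∃ c ∈ Y ∪ Z, ∀ z ∈ Z, g z = c) (hcontr : TopContracting G₁ Y) :
    TopFractalOn (G₁ ∪ G₂) (Y ∪ Z) := by
  have hmaps := forall_apply_mem_union hG₁ hG₂
  refine ⟨hY.union hZ, hG, fun g hg => ⟨hcont g hg, image_subset_iff.2 fun x _ => hmaps g hg x⟩,
    (iUnion₂_subset fun g hg => image_subset_iff.2 fun x _ => hmaps g hg x).antisymm ?_,
    hcontr.union_of_const_on hG (fun g hg => (hcont g hg).mono subset_union_left) hG₁ hG₂ hconst⟩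
  calc Y ∪ Z = (⋃ g ∈ G₁, g '' Y) ∪ ⋃ g ∈ G₂, g '' Y := by rw [hG₁Y, hG₂Y]
    _ ⊆ ⋃ g ∈ G₁ ∪ G₂, g '' (Y ∪ Z) := by
      rw [biUnion_union]
      exact union_subset_union (iUnion₂_mono fun g _ => image_mono subset_union_left)
        (iUnion₂_mono fun g _ => image_mono subset_union_left)

end

section

variable {X : Type*} {Y Z : Set X} {f : X → X} {c : X} [∀ x, Decidable (x ∈ Y)]

theorem piecewise_const_mem {K : Set X} (hf : MapsTo f Y K) (hc : c ∈ K) (x : X) :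
    Y.piecewise f (fun _ => c) x ∈ K := by
  by_cases hx : x ∈ Y
  · rw [piecewise_eq_of_mem _ _ _ hx]
    exact hf hx
  · rw [piecewise_eq_of_notMem _ _ _ hx]
    exact hc

theorem piecewise_const_eq_of_disjoint (hYZ : Disjoint Y Z) {z : X} (hz : z ∈ Z) :
    Y.piecewise f (fun _ => c) z = c :=
  piecewise_eq_of_notMem _ _ _ (hYZ.notMem_of_mem_right hz)

theorem setOf_exists_eq_ite_eq_image (S : Set (X → X)) (c : X) :
    {g | ∃ f ∈ S, g = fun x => if x ∈ Y then f x else c} = (Y.piecewise · fun _ => c) '' S :=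
  ext fun _ => exists_congr fun _ => and_congr_right fun _ => eq_comm

theorem biUnion_image_piecewise_image (S : Set (X → X)) (g : X → X) :
    ⋃ f' ∈ (Y.piecewise · g) '' S, f' '' Y = ⋃ f ∈ S, f '' Y :=
  biUnion_image.trans (iUnion₂_congr fun f _ => (piecewise_eqOn Y f g).image_eq)

theorem ContinuousOn.piecewise_const_union [TopologicalSpace X] (hf : ContinuousOn f Y)
    (hY : IsClosed Y) (hZ : IsClosed Z) (hYZ : Disjoint Y Z) :
    ContinuousOn (Y.piecewise f fun _ => c) (Y ∪ Z) :=
  (hf.congr (piecewise_eqOn Y f _)).union_of_isClosed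
    (continuousOn_const.congr fun _ hz => piecewise_const_eq_of_disjoint hYZ hz) hY hZ

end

open scoped Classical in
theorem stmt6_general {W : Type*} [TopologicalSpace W] [T2Space W] (Y Z : Set W)
    (F P : Set (W → W)) (hYF : TopFractalOn F Y)
    (hP : P.Finite) (hPcont : ∀ p ∈ P, ContinuousOn p Y)
    (hPZ : (⋃ p ∈ P, p '' Y) = Z)
    (hYZ : Y ∩ Z = ∅)
    (y₀ : W) (hy₀ : y₀ ∈ Y) (z₀ : W) (hz₀ : z₀ ∈ Z) :
    TopFractalOn
      ({g | ∃ f ∈ F, g = fun x => if x ∈ Y then f x else y₀} ∪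
       {g | ∃ p ∈ P, g = fun x => if x ∈ Y then p x else z₀})
      (Y ∪ Z) := by
  obtain ⟨hY, hFfin, hF, hFY, hFcontr⟩ := hYF
  have hZ : IsCompact Z :=
    hPZ ▸ hP.isCompact_biUnion fun p hp => hY.image_of_continuousOn (hPcont p hp)
  have hdisj : Disjoint Y Z := disjoint_iff_inter_eq_empty.2 hYZ
  have hFmaps : ∀ f ∈ F, MapsTo f Y Y := fun f hf => mapsTo_iff_image_subset.2 (hF f hf).2
  have hPmaps : ∀ p ∈ P, MapsTo p Y Z := fun p hp y hy =>
    hPZ ▸ mem_biUnion hp (mem_image_of_mem p hy)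
  rw [setOf_exists_eq_ite_eq_image, setOf_exists_eq_ite_eq_image]
  refine .union_of_const_on hY hZ ((hFfin.image _).union (hP.image _)) ?_
    (forall_mem_image.2 fun f hf => piecewise_const_mem (hFmaps f hf) hy₀)
    (forall_mem_image.2 fun p hp => piecewise_const_mem (hPmaps p hp) hz₀)
    ((biUnion_image_piecewise_image F _).trans hFY) ((biUnion_image_piecewise_image P _).trans hPZ)
    ?_ (hFcontr.of_eqOn hFmaps (forall_mem_image.2 fun f hf => ⟨f, hf, piecewise_eqOn _ _ _⟩))
  · rintro _ (⟨f, hf, rfl⟩ | ⟨p, hp, rfl⟩)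
    exacts [(hF f hf).1.piecewise_const_union hY.isClosed hZ.isClosed hdisj,
      (hPcont p hp).piecewise_const_union hY.isClosed hZ.isClosed hdisj]
  · rintro _ (⟨f, -, rfl⟩ | ⟨p, -, rfl⟩)
    exacts [⟨y₀, .inl hy₀, fun z hz => piecewise_const_eq_of_disjoint hdisj hz⟩,
      ⟨z₀, .inr hz₀, fun z hz => piecewise_const_eq_of_disjoint hdisj hz⟩]

open scoped Classical in
theorem stmt6 {W : Type*} [TopologicalSpace W] [T2Space W] (Y Z : Set W)
    (F P : Set (W → W)) (hYF : TopFractalOn F Y)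
    (hP : P.Finite) (hPcont : ∀ p ∈ P, ContinuousOn p Y)
    (hPZ : (⋃ p ∈ P, p '' Y) = Z)
    (hYZ : Y ∩ Z = ∅) (hcomp : IsCompact (Y ∪ Z))
    (y₀ : W) (hy₀ : y₀ ∈ Y) (z₀ : W) (hz₀ : z₀ ∈ Z) :
    TopFractalOn
      ({g | ∃ f ∈ F, g = fun x => if x ∈ Y then f x else y₀} ∪
       {g | ∃ p ∈ P, g = fun x => if x ∈ Y then p x else z₀})
      (Y ∪ Z) :=
  stmt6_general Y Z F P hYF hP hPcont hPZ hYZ y₀ hy₀ z₀ hz₀
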